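/- arXiv:2504.04585 — 3 statements merged into one kernel-verified Lean document; each statement's English description precedes it below -/
import Mathlib

section
/- Let H = (V_1 ∪ ... ∪ V_r, E) be an n-balanced r-uniform r-partite hypergraph with balanced chromatic number q satisfying 3 ≤ q < ∞. Then |E| ≥ (q-1)n / (r(r-1)). -/
def HasBalancedColoring {V : Type*} [Fintype V] [DecidableEq V] {r : ℕ}
    (parts : Fin r → Finset V) (E : Finset (Finset V)) (q : ℕ) : Prop :=
  ∃ φ : V → Fin q, ∀ c : Fin q,
    (∀ e ∈ E, ¬ e ⊆ Finset.univ.filter (fun v => φ v = c)) ∧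
    (∀ i j, ((Finset.univ.filter (fun v => φ v = c)) ∩ parts i).card
          = ((Finset.univ.filter (fun v => φ v = c)) ∩ parts j).card)

/-!
Fix an optimal balanced colouring and a set `S` of at least three colours. The vertices coloured
from `S` form an `N`-balanced sub-hypergraph whose edges are the edges coloured inside `S`. If it
had fewer than `N` edges it would have a balanced 2-colouring, and recolouring `S` with these two
colours would save a colour. So it has at least `N` edges. Averaging over all triples `S`, a vertex
lies in `C(q-1, 2)` triples while an edge, which sees at least two colours, lies in at most `q - 2`;
hence `n C(q-1, 2) ≤ |E| (q - 2)`, i.e. `|E| ≥ (q-1) n / 2 ≥ (q-1) n / (r(r-1))`.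

The balanced 2-colouring of an `N`-balanced hypergraph with fewer than `N` edges only looks at two
parts `X` and `Y`. In the bipartite multigraph on `X ∪ Y` with one edge `x e — y e` per hyperedge,
a component with `m` edges has at most `m + 1` vertices, so the components can be split into two
groups each spanning at most `|E| + 1 ≤ N` vertices. Colouring the `X`-side of the first group and
the `Y`-side of the second group, and padding every part to the same size, splits every edge.
-/

open Finset Function

theorem exists_subset_sum_between {ι : Type*} [DecidableEq ι] (c : ι → ℕ) {M : ℕ}
    (s : Finset ι) (hc : ∀ j ∈ s, c j ≤ M) {D : ℕ} (hD : D ≤ ∑ j ∈ s, c j) :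
    ∃ t ⊆ s, D ≤ ∑ j ∈ t, c j ∧ ∑ j ∈ t, c j ≤ D + M := by
  induction s using Finset.induction_on generalizing D with
  | empty => exact ⟨∅, subset_rfl, hD, by simp⟩
  | insert j s hj ih =>
    have hcj := hc j (mem_insert_self j s)
    by_cases hjD : D ≤ c j
    · exact ⟨{j}, singleton_subset_iff.2 (mem_insert_self j s), by rwa [sum_singleton],
        by rw [sum_singleton]; omega⟩
    rw [sum_insert hj] at hD
    obtain ⟨t, hts, h₁, h₂⟩ := ih (fun i hi => hc i (mem_insert_of_mem hi)) (D := D - c j)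
      (by omega)
    have hjt : j ∉ t := fun h => hj (hts h)
    refine ⟨insert j t, insert_subset_insert j hts, ?_, ?_⟩ <;> rw [sum_insert hjt] <;> omega

section Bipartite

variable {ι α β : Type*} [DecidableEq ι] [DecidableEq α] [DecidableEq β]

lemma pairwiseDisjoint_image_insert_biUnion_sdiff (f : ι → α) {G A : Finset (Finset ι)} {e : ι}
    (hG : (G : Set (Finset ι)).PairwiseDisjoint (image f)) (hAG : A ⊆ G)
    (hA : ∀ g ∈ G \ A, f e ∉ g.image f) :
    (↑(insert (insert e (A.biUnion id)) (G \ A)) : Set (Finset ι)).PairwiseDisjoint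
      (image f) := by
  rw [coe_insert]
  refine (hG.subset (coe_subset.2 sdiff_subset)).insert fun g hg _ => ?_
  obtain ⟨hgG, hgA⟩ := mem_sdiff.1 hg
  rw [image_insert, biUnion_image, disjoint_insert_left, disjoint_biUnion_left]
  exact ⟨hA g hg, fun a ha => hG (hAG ha) hgG (ne_of_mem_of_not_mem ha hgA)⟩

lemma card_image_insert_biUnion_add_card_filter_le (f : ι → α) {A : Finset (Finset ι)} (e : ι)
    (hA : (A : Set (Finset ι)).PairwiseDisjoint (image f)) :
    #((insert e (A.biUnion id)).image f) + #{a ∈ A | f e ∈ a.image f}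
      ≤ ∑ a ∈ A, #(a.image f) + 1 := by
  have hfilter : #{a ∈ A | f e ∈ a.image f} ≤ 1 := card_le_one.2 fun a ha b hb => by
    rw [mem_filter] at ha hb
    by_contra hab
    exact disjoint_left.1 (hA ha.1 hb.1 hab) ha.2 hb.2
  have hunion : #(A.biUnion fun a => a.image f) ≤ ∑ a ∈ A, #(a.image f) := card_biUnion_le
  rw [image_insert, biUnion_image]
  simp only [id_eq]
  by_cases h : f e ∈ A.biUnion fun a => a.image f
  · rw [insert_eq_of_mem h]
    omega
  · have hempty : #{a ∈ A | f e ∈ a.image f} = 0 := by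
      rw [card_eq_zero, filter_eq_empty_iff]
      exact fun a ha hfa => h (mem_biUnion.2 ⟨a, ha, hfa⟩)
    have := card_insert_le (f e) (A.biUnion fun a => a.image f)
    omega

/-- The blocks of `G` are the edge sets of the connected components of the bipartite multigraph
with one edge `x e — y e` for each `e ∈ F`. -/
theorem exists_partition_disjoint_images (x : ι → α) (y : ι → β) (F : Finset ι) :
    ∃ G : Finset (Finset ι), G.biUnion id = F ∧ (∀ g ∈ G, g.Nonempty) ∧
      (G : Set (Finset ι)).PairwiseDisjoint (image x) ∧
      (G : Set (Finset ι)).PairwiseDisjoint (image y) ∧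
      ∀ g ∈ G, #(g.image x) + #(g.image y) ≤ #g + 1 := by
  induction F using Finset.induction_on with
  | empty => exact ⟨∅, by simp, by simp, by simp, by simp, by simp⟩
  | insert e F he ih =>
    obtain ⟨G, hGF, hne, hx, hy, hcard⟩ := ih
    -- `e` merges the blocks `A` it touches; there are at most two of them
    set A := {g ∈ G | x e ∈ g.image x ∨ y e ∈ g.image y}
    have hAG : A ⊆ G := filter_subset _ _
    have hGA : ∀ g ∈ G \ A, x e ∉ g.image x ∧ y e ∉ g.image y := fun g hg => by
      simp only [A, mem_sdiff, mem_filter, not_and, not_or] at hg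
      exact hg.2 hg.1
    refine ⟨insert (insert e (A.biUnion id)) (G \ A), ?_, ?_,
      pairwiseDisjoint_image_insert_biUnion_sdiff x hx hAG fun g hg => (hGA g hg).1,
      pairwiseDisjoint_image_insert_biUnion_sdiff y hy hAG fun g hg => (hGA g hg).2, ?_⟩
    · rw [biUnion_insert, id_eq, insert_union, ← union_biUnion, union_sdiff_of_subset hAG, hGF]
    · simp only [mem_insert, forall_eq_or_imp]
      exact ⟨insert_nonempty _ _, fun g hg => hne g (mem_sdiff.1 hg).1⟩
    simp only [mem_insert, forall_eq_or_imp]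
    refine ⟨?_, fun g hg => hcard g (mem_sdiff.1 hg).1⟩
    have heA : e ∉ A.biUnion id := fun h =>
      he (hGF ▸ biUnion_subset_biUnion_of_subset_left id hAG h)
    have hsize : #(insert e (A.biUnion id)) = ∑ a ∈ A, #a + 1 := by
      rw [card_insert_of_notMem heA]
      congr 1
      exact card_biUnion fun a ha b hb hab => (hx (hAG ha) (hAG hb) hab).of_image_finset
    have hAxy : #A ≤ #{a ∈ A | x e ∈ a.image x} + #{a ∈ A | y e ∈ a.image y} := by
      have hsplit : A = {a ∈ A | x e ∈ a.image x} ∪ {a ∈ A | y e ∈ a.image y} := by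
        rw [← filter_or, filter_true_of_mem fun a ha => (mem_filter.1 ha).2]
      exact (congrArg card hsplit).le.trans (card_union_le _ _)
    have hsum : ∑ a ∈ A, (#(a.image x) + #(a.image y)) ≤ ∑ a ∈ A, (#a + 1) :=
      sum_le_sum fun a ha => hcard a (hAG ha)
    rw [sum_add_distrib, sum_add_distrib, sum_const, smul_eq_mul, mul_one] at hsum
    have := card_image_insert_biUnion_add_card_filter_le x e (hx.subset (coe_subset.2 hAG))
    have := card_image_insert_biUnion_add_card_filter_le y e (hy.subset (coe_subset.2 hAG))
    omega

lemma card_image_biUnion_of_pairwiseDisjoint (f : ι → α) {G : Finset (Finset ι)}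
    (hG : (G : Set (Finset ι)).PairwiseDisjoint (image f)) :
    #((G.biUnion id).image f) = ∑ g ∈ G, #(g.image f) := by
  rw [biUnion_image]
  exact card_biUnion hG

lemma disjoint_image_biUnion_sdiff (f : ι → α) {G S : Finset (Finset ι)}
    (hG : (G : Set (Finset ι)).PairwiseDisjoint (image f)) (hSG : S ⊆ G) :
    Disjoint ((S.biUnion id).image f) (((G \ S).biUnion id).image f) := by
  rw [biUnion_image, biUnion_image, disjoint_biUnion_left]
  intro g hg
  rw [disjoint_biUnion_right]
  intro g' hg'
  exact hG (hSG hg) (mem_sdiff.1 hg').1 (ne_of_mem_of_not_mem hg (mem_sdiff.1 hg').2)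

lemma card_add_card_le_card_biUnion {G : Finset (Finset ι)} (hne : ∀ g ∈ G, g.Nonempty)
    (hG : (G : Set (Finset ι)).PairwiseDisjoint id) {g : Finset ι} (hg : g ∈ G) :
    #g + #G ≤ #(G.biUnion id) + 1 := by
  have hrest : #(G.erase g) ≤ ∑ g' ∈ G.erase g, #g' := by
    simpa using card_nsmul_le_sum (G.erase g) card 1 fun g' hg' =>
      (hne g' (mem_of_mem_erase hg')).card_pos
  rw [card_biUnion hG]
  simp only [id_eq]
  rw [← add_sum_erase G card hg]
  have := card_erase_of_mem hg
  have := card_pos.2 ⟨g, hg⟩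
  omega

theorem exists_split_disjoint_images (x : ι → α) (y : ι → β) (F : Finset ι) :
    ∃ F₁ F₂ : Finset ι, F₁ ∪ F₂ = F ∧
      Disjoint (F₁.image x) (F₂.image x) ∧ Disjoint (F₁.image y) (F₂.image y) ∧
      #(F₁.image x) + #(F₁.image y) ≤ #F + 1 ∧ #(F₂.image x) + #(F₂.image y) ≤ #F + 1 := by
  obtain ⟨G, hGF, hne, hx, hy, hcard⟩ := exists_partition_disjoint_images x y F
  rcases G.eq_empty_or_nonempty with rfl | ⟨g₀, hg₀⟩
  · rw [biUnion_empty] at hGF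
    subst hGF
    exact ⟨∅, ∅, by simp⟩
  have hdisj : (G : Set (Finset ι)).PairwiseDisjoint id :=
    fun g hg g' hg' h => (hx hg hg' h).of_image_finset
  have hsumG : ∑ g ∈ G, #g = #F := by
    rw [← hGF]
    exact (card_biUnion hdisj).symm
  have hblock : ∀ g ∈ G, #g + #G ≤ #F + 1 := fun g hg => by
    simpa only [hGF] using card_add_card_le_card_biUnion hne hdisj hg
  have hG₀ := card_pos.2 ⟨g₀, hg₀⟩
  have hGF₀ := hblock g₀ hg₀
  have hg₀F := (hne g₀ hg₀).card_pos
  set c : Finset ι → ℕ := fun g => #(g.image x) + #(g.image y)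
  have hc : ∀ g ∈ G, c g + #G ≤ #F + 2 := fun g hg => by
    have : c g ≤ #g + 1 := hcard g hg
    have := hblock g hg
    omega
  have htotal : ∑ g ∈ G, c g ≤ #F + #G := by
    calc ∑ g ∈ G, c g ≤ ∑ g ∈ G, (#g + 1) := sum_le_sum hcard
      _ = #F + #G := by rw [sum_add_distrib, hsumG, sum_const, smul_eq_mul, mul_one]
  have hcS : ∀ T ⊆ G, #((T.biUnion id).image x) + #((T.biUnion id).image y) = ∑ g ∈ T, c g :=
    fun T hT => by
      rw [card_image_biUnion_of_pairwiseDisjoint x (hx.subset (coe_subset.2 hT)),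
        card_image_biUnion_of_pairwiseDisjoint y (hy.subset (coe_subset.2 hT)), sum_add_distrib]
  clear_value c
  obtain ⟨S, hSG, hS₁, hS₂⟩ := exists_subset_sum_between c G (M := #F + 2 - #G)
    (fun g hg => by have := hc g hg; omega) (D := ∑ g ∈ G, c g - (#F + 1)) (by omega)
  have hsum_sdiff := sum_sdiff hSG (f := c)
  refine ⟨S.biUnion id, (G \ S).biUnion id, ?_, disjoint_image_biUnion_sdiff x hx hSG,
    disjoint_image_biUnion_sdiff y hy hSG, ?_, ?_⟩
  · rw [← union_biUnion, union_sdiff_of_subset hSG, hGF]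
  · rw [hcS S hSG]
    omega
  · rw [hcS _ sdiff_subset]
    omega

theorem exists_bisection_of_card_lt (x : ι → α) (y : ι → β) {F : Finset ι} {X : Finset α}
    {Y : Finset β} {N : ℕ} (hx : ∀ e ∈ F, x e ∈ X) (hy : ∀ e ∈ F, y e ∈ Y) (hX : #X = N)
    (hY : #Y = N) (hF : #F < N) :
    ∃ BX ⊆ X, ∃ BY ⊆ Y, #BX = #BY ∧ ∀ e ∈ F, (x e ∈ BX ↔ y e ∉ BY) := by
  obtain ⟨F₁, F₂, hF₁₂, hdx, hdy, h₁, h₂⟩ := exists_split_disjoint_images x y F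
  have hxX : ∀ F' ⊆ F, F'.image x ⊆ X := fun F' h => image_subset_iff.2 fun e he => hx e (h he)
  have hyY : ∀ F' ⊆ F, F'.image y ⊆ Y := fun F' h => image_subset_iff.2 fun e he => hy e (h he)
  have hF₁ : F₁ ⊆ F := hF₁₂ ▸ subset_union_left
  have hF₂ : F₂ ⊆ F := hF₁₂ ▸ subset_union_right
  have hcX := card_le_card (union_subset (hxX F₁ hF₁) (hxX F₂ hF₂))
  have hcY := card_le_card (union_subset (hyY F₁ hF₁) (hyY F₂ hF₂))
  rw [card_union_of_disjoint hdx] at hcX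
  rw [card_union_of_disjoint hdy] at hcY
  set t := max #(F₁.image x) #(F₂.image y)
  obtain ⟨BX, hBX₁, hBX₂, hBX⟩ := exists_subsuperset_card_eq (n := t)
    (subset_sdiff.2 ⟨hxX F₁ hF₁, hdx⟩) (le_max_left _ _)
    (by rw [card_sdiff_of_subset (hxX F₂ hF₂)]; omega)
  obtain ⟨BY, hBY₁, hBY₂, hBY⟩ := exists_subsuperset_card_eq (n := t)
    (subset_sdiff.2 ⟨hyY F₂ hF₂, hdy.symm⟩) (le_max_right _ _)
    (by rw [card_sdiff_of_subset (hyY F₁ hF₁)]; omega)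
  refine ⟨BX, hBX₂.trans sdiff_subset, BY, hBY₂.trans sdiff_subset, hBX.trans hBY.symm,
    fun e he => ?_⟩
  rcases mem_union.1 (hF₁₂ ▸ he) with he | he
  · exact iff_of_true (hBX₁ (mem_image_of_mem x he))
      fun h => (mem_sdiff.1 (hBY₂ h)).2 (mem_image_of_mem y he)
  · exact iff_of_false (fun h => (mem_sdiff.1 (hBX₂ h)).2 (mem_image_of_mem x he))
      (not_not.2 (hBY₁ (mem_image_of_mem y he)))

end Bipartite

lemma exists_subset_card_eq_family {ι V : Type*} [DecidableEq ι] {P : ι → Finset V} {N t : ℕ}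
    (hP : ∀ i, #(P i) = N) (ht : t ≤ N) {i₀ i₁ : ι} (hi : i₀ ≠ i₁) {X Y : Finset V}
    (hX : X ⊆ P i₀) (hY : Y ⊆ P i₁) (hXt : #X = t) (hYt : #Y = t) :
    ∃ C : ι → Finset V, (∀ i, C i ⊆ P i ∧ #(C i) = t) ∧ C i₀ = X ∧ C i₁ = Y := by
  choose D hDP hDt using fun i => exists_subset_card_eq ((hP i).symm ▸ ht : t ≤ #(P i))
  refine ⟨update (update D i₀ X) i₁ Y, fun i => ?_, by simp [update_of_ne hi], by simp⟩
  rcases eq_or_ne i i₁ with rfl | h₁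
  · simp [hY, hYt]
  rcases eq_or_ne i i₀ with rfl | h₀
  · simp [update_of_ne h₁, hX, hXt]
  · simp [update_of_ne h₁, update_of_ne h₀, hDP, hDt]

section Hypergraph

variable {V : Type*} [DecidableEq V] {r : ℕ} (parts : Fin r → Finset V)
  (E : Finset (Finset V))

def IsBalanced (I : Finset V) : Prop :=
  ∀ i j, #(I ∩ parts i) = #(I ∩ parts j)

def IsBalancedIndepSet (I : Finset V) : Prop :=
  (∀ e ∈ E, ¬ e ⊆ I) ∧ IsBalanced parts I

lemma biUnion_inter_eq_of_subset {ι : Type*} [Fintype ι] {P C : ι → Finset V}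
    (hdisj : Pairwise (Disjoint on P)) (hC : ∀ i, C i ⊆ P i) (i : ι) :
    univ.biUnion C ∩ P i = C i := by
  ext w
  simp only [mem_inter, mem_biUnion, mem_univ, true_and]
  refine ⟨fun ⟨⟨j, hj⟩, hw⟩ => ?_, fun hw => ⟨⟨i, hw⟩, hC i hw⟩⟩
  obtain rfl : j = i := by_contra fun hji => disjoint_left.1 (hdisj hji) (hC j hj) hw
  exact hj

theorem exists_balanced_splitting_set {N : ℕ} (hr : 2 ≤ r) (hP : ∀ i, #(parts i) = N)
    (hdisj : Pairwise (Disjoint on parts)) (hE : ∀ e ∈ E, ∀ i, (e ∩ parts i).Nonempty)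
    (hlt : #E < N) :
    ∃ B ⊆ univ.biUnion parts, IsBalanced parts B ∧
      ∀ e ∈ E, (e ∩ B).Nonempty ∧ (e \ B).Nonempty := by
  let i₀ : Fin r := ⟨0, by omega⟩
  let i₁ : Fin r := ⟨1, by omega⟩
  have hi : i₀ ≠ i₁ := by simp [i₀, i₁, Fin.ext_iff]
  have : Nonempty V := by
    obtain ⟨v, -⟩ := card_pos.1 ((hP i₀).symm ▸ (by omega : 0 < N))
    exact ⟨v⟩
  choose! v hv using hE
  have hve : ∀ e ∈ E, ∀ i, v e i ∈ e := fun e he i => (mem_inter.1 (hv e he i)).1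
  obtain ⟨BX, hBX, BY, hBY, hcard, hsplit⟩ := exists_bisection_of_card_lt
    (fun e => v e i₀) (fun e => v e i₁) (fun e he => (mem_inter.1 (hv e he i₀)).2)
    (fun e he => (mem_inter.1 (hv e he i₁)).2) (hP i₀) (hP i₁) hlt
  obtain ⟨C, hC, rfl, rfl⟩ := exists_subset_card_eq_family hP
    ((hP i₀) ▸ card_le_card hBX) hi hBX hBY rfl hcard.symm
  have hBP := biUnion_inter_eq_of_subset hdisj fun i => (hC i).1
  refine ⟨univ.biUnion C, biUnion_mono fun i _ => (hC i).1,
    fun i j => by rw [hBP, hBP, (hC i).2, (hC j).2], fun e he => ?_⟩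
  have hmem : ∀ i, v e i ∈ univ.biUnion C ↔ v e i ∈ C i := fun i => by
    rw [← hBP i, mem_inter, and_iff_left (mem_inter.1 (hv e he i)).2]
  have h := hsplit e he
  rw [← hmem, ← hmem] at h
  by_cases hx : v e i₀ ∈ univ.biUnion C
  · exact ⟨⟨_, mem_inter.2 ⟨hve e he i₀, hx⟩⟩, ⟨_, mem_sdiff.2 ⟨hve e he i₁, h.1 hx⟩⟩⟩
  · exact ⟨⟨_, mem_inter.2 ⟨hve e he i₁, not_not.1 (mt h.2 hx)⟩⟩,
      ⟨_, mem_sdiff.2 ⟨hve e he i₀, hx⟩⟩⟩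

lemma isBalancedIndepSet_empty (hE : ∀ e ∈ E, e.Nonempty) : IsBalancedIndepSet parts E ∅ :=
  ⟨fun e he h => (hE e he).ne_empty (subset_empty.1 h), fun i j => by simp⟩

lemma isBalancedIndepSet_of_splits {W B : Finset V} (hBW : B ⊆ W) (hW : IsBalanced parts W)
    (hB : IsBalanced parts B)
    (hsplit : ∀ e ∈ E, e ⊆ W → (e ∩ B).Nonempty ∧ (e \ B).Nonempty) :
    IsBalancedIndepSet parts E B ∧ IsBalancedIndepSet parts E (W \ B) := by
  refine ⟨⟨fun e he heB => ?_, hB⟩, ⟨fun e he heWB => ?_, fun i j => ?_⟩⟩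
  · obtain ⟨w, hw⟩ := (hsplit e he (heB.trans hBW)).2
    exact (mem_sdiff.1 hw).2 (heB (mem_sdiff.1 hw).1)
  · obtain ⟨w, hw⟩ := (hsplit e he (heWB.trans sdiff_subset)).1
    exact (mem_sdiff.1 (heWB (mem_inter.1 hw).1)).2 (mem_inter.1 hw).2
  · have hBi : ∀ i, B ∩ (W ∩ parts i) = B ∩ parts i := fun i => by
      rw [← inter_assoc, inter_eq_left.2 hBW]
    rw [sdiff_inter_right_comm, sdiff_inter_right_comm, card_sdiff, card_sdiff, hBi, hBi,
      hW i j, hB i j]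

theorem exists_balanced_splitting_subset (hr : 2 ≤ r) (hdisj : Pairwise (Disjoint on parts))
    (hE : ∀ e ∈ E, ∀ i, (e ∩ parts i).Nonempty) {W : Finset V} (hW : IsBalanced parts W)
    (i₀ : Fin r) (hlt : #{e ∈ E | e ⊆ W} < #(W ∩ parts i₀)) :
    ∃ B ⊆ W, IsBalanced parts B ∧ ∀ e ∈ E, e ⊆ W → (e ∩ B).Nonempty ∧ (e \ B).Nonempty := by
  obtain ⟨B, hBU, hBbal, hBsplit⟩ := exists_balanced_splitting_set (fun i => W ∩ parts i)
    {e ∈ E | e ⊆ W} hr (fun i => hW i i₀)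
    (fun i j h => disjoint_of_subset_left inter_subset_right
      (disjoint_of_subset_right inter_subset_right (hdisj h)))
    (fun e he i => by
      obtain ⟨he, heW⟩ := mem_filter.1 he
      obtain ⟨w, hw⟩ := hE e he i
      obtain ⟨hwe, hwi⟩ := mem_inter.1 hw
      exact ⟨w, mem_inter.2 ⟨hwe, mem_inter.2 ⟨heW hwe, hwi⟩⟩⟩)
    hlt
  have hBW : B ⊆ W := hBU.trans (biUnion_subset.2 fun _ _ => inter_subset_left)
  refine ⟨B, hBW, fun i j => ?_, fun e he heW => hBsplit e (mem_filter.2 ⟨he, heW⟩)⟩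
  have := hBbal i j
  rwa [← inter_assoc, ← inter_assoc, inter_eq_left.2 hBW] at this

variable [Fintype V]

lemma isBalanced_filter_mem {κ : Type*} [DecidableEq κ] (φ : V → κ)
    (hφ : ∀ c, IsBalanced parts {v | φ v = c}) (S : Finset κ) :
    IsBalanced parts {v | φ v ∈ S} := by
  have hsum : ∀ i, #(({v | φ v ∈ S} : Finset V) ∩ parts i)
      = ∑ c ∈ S, #(({v | φ v = c} : Finset V) ∩ parts i) := by
    intro i
    rw [card_eq_sum_card_fiberwise (s := ({v | φ v ∈ S} : Finset V) ∩ parts i) (t := S)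
      fun v hv => (mem_filter.1 (mem_inter.1 hv).1).2]
    refine sum_congr rfl fun c hc => congrArg card ?_
    ext v
    simp only [mem_filter, mem_inter, mem_univ, true_and]
    exact ⟨fun ⟨⟨_, hv⟩, hvc⟩ => ⟨hvc, hv⟩, fun ⟨hvc, hv⟩ => ⟨⟨hvc ▸ hc, hv⟩, hvc⟩⟩
  intro i j
  rw [hsum i, hsum j]
  exact sum_congr rfl fun c _ => hφ c i j

theorem hasBalancedColoring_of_card_le {κ : Type*} [Fintype κ] [DecidableEq κ] {q : ℕ}
    (hE : ∀ e ∈ E, e.Nonempty) (φ : V → κ)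
    (hφ : ∀ c, IsBalancedIndepSet parts E {v | φ v = c}) (hκ : Fintype.card κ ≤ q) :
    HasBalancedColoring parts E q := by
  obtain ⟨f⟩ := Function.Embedding.nonempty_of_card_le
    (by simpa using hκ : Fintype.card κ ≤ Fintype.card (Fin q))
  refine ⟨f ∘ φ, fun c => ?_⟩
  show IsBalancedIndepSet parts E {v | f (φ v) = c}
  by_cases hc : ∃ a, f a = c
  · obtain ⟨a, rfl⟩ := hc
    simpa only [f.injective.eq_iff] using hφ a
  · simp only [not_exists] at hc
    rw [filter_false_of_mem fun v _ => hc (φ v)]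
    exact isBalancedIndepSet_empty parts E hE

theorem hasBalancedColoring_sub_one_of_card_lt {q : ℕ} (hr : 2 ≤ r)
    (hdisj : Pairwise (Disjoint on parts)) (hE : ∀ e ∈ E, ∀ i, (e ∩ parts i).Nonempty)
    (φ : V → Fin q) (hφ : ∀ c, IsBalancedIndepSet parts E {v | φ v = c})
    {S : Finset (Fin q)} (hS : 3 ≤ #S) (i₀ : Fin r)
    (hlt : #{e ∈ E | e.image φ ⊆ S} < #{v ∈ parts i₀ | φ v ∈ S}) :
    HasBalancedColoring parts E (q - 1) := by
  set W : Finset V := {v | φ v ∈ S}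
  have hW := isBalanced_filter_mem parts φ (fun c => (hφ c).2) S
  have hEW : {e ∈ E | e ⊆ W} = {e ∈ E | e.image φ ⊆ S} := filter_congr fun e _ => by
    rw [image_subset_iff, subset_iff]
    simp only [W, mem_filter, mem_univ, true_and]
  obtain ⟨B, hBW, hB, hBsplit⟩ := exists_balanced_splitting_subset parts E hr hdisj hE hW i₀
    (by rwa [hEW, filter_inter, univ_inter])
  obtain ⟨hBind, hWBind⟩ := isBalancedIndepSet_of_splits parts E hBW hW hB hBsplit
  let ψ : V → {c // c ∉ S} ⊕ Bool := fun v =>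
    if h : φ v ∈ S then .inr (decide (v ∈ B)) else .inl ⟨φ v, h⟩
  have hcard : Fintype.card ({c // c ∉ S} ⊕ Bool) ≤ q - 1 := by
    have := card_le_univ S
    simp only [Fintype.card_sum, Fintype.card_subtype_compl, Fintype.card_fin, Fintype.card_coe,
      Fintype.card_bool] at this ⊢
    omega
  refine hasBalancedColoring_of_card_le parts E
    (fun e he => (hE e he ⟨0, by omega⟩).mono inter_subset_left) ψ ?_ hcard
  rintro (⟨c, hc⟩ | _ | _)
  · convert hφ c using 1
    ext v
    by_cases hv : φ v ∈ S
    · simp [ψ, hv, ne_of_mem_of_not_mem hv hc]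
    · simp [ψ, hv]
  · convert hWBind using 1
    ext v
    by_cases hv : φ v ∈ S <;> simp [ψ, hv]
  · convert hBind using 1
    ext v
    by_cases hv : φ v ∈ S
    · simp [ψ, hv]
    · have hvB : v ∉ B := fun h => hv (mem_filter.1 (hBW h)).2
      simp [ψ, hv, hvB]

end Hypergraph

section DoubleCounting

variable {κ : Type*} [DecidableEq κ]

theorem card_filter_powersetCard_superset {s T : Finset κ} {k : ℕ} (hT : T ⊆ s) (hk : #T ≤ k) :
    #{S ∈ powersetCard k s | T ⊆ S} = (#s - #T).choose (k - #T) := by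
  rw [← card_sdiff_of_subset hT, ← card_powersetCard]
  refine card_nbij' (· \ T) (· ∪ T) (fun S hS => ?_) (fun U hU => ?_)
    (fun S hS => sdiff_union_of_subset (mem_filter.1 hS).2)
    (fun U hU => union_sdiff_cancel_right
      (disjoint_sdiff_self_left.mono_left (mem_powersetCard.1 hU).1))
  · obtain ⟨hS, hTS⟩ := mem_filter.1 hS
    obtain ⟨hSs, hSk⟩ := mem_powersetCard.1 hS
    exact mem_powersetCard.2
      ⟨sdiff_subset_sdiff hSs subset_rfl, by rw [card_sdiff_of_subset hTS, hSk]⟩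
  · obtain ⟨hUs, hUk⟩ := mem_powersetCard.1 hU
    refine mem_filter.2 ⟨mem_powersetCard.2 ⟨union_subset (hUs.trans sdiff_subset) hT, ?_⟩,
      subset_union_right⟩
    rw [card_union_of_disjoint (disjoint_sdiff_self_left.mono_left hUs), hUk]
    omega

variable {V : Type*} (f : V → κ) (s : Finset κ)

theorem sum_powersetCard_card_filter_mem (A : Finset V) (hA : ∀ v ∈ A, f v ∈ s) {k : ℕ}
    (hk : 1 ≤ k) :
    ∑ S ∈ powersetCard k s, #{v ∈ A | f v ∈ S} = #A * (#s - 1).choose (k - 1) := by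
  calc ∑ S ∈ powersetCard k s, #{v ∈ A | f v ∈ S}
      = ∑ v ∈ A, #{S ∈ powersetCard k s | f v ∈ S} := by
        simp only [card_eq_sum_ones, sum_filter]
        exact sum_comm
    _ = ∑ v ∈ A, (#s - 1).choose (k - 1) := sum_congr rfl fun v hv => by
        simpa using card_filter_powersetCard_superset (k := k)
          (singleton_subset_iff.2 (hA v hv)) (by simpa)
    _ = #A * (#s - 1).choose (k - 1) := by rw [sum_const, smul_eq_mul]

theorem sum_powersetCard_card_filter_image_subset_le (E : Finset (Finset V))
    (hE : ∀ e ∈ E, ∃ u ∈ e, ∃ w ∈ e, f u ≠ f w ∧ f u ∈ s ∧ f w ∈ s) {k : ℕ} (hk : 2 ≤ k) :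
    ∑ S ∈ powersetCard k s, #{e ∈ E | e.image f ⊆ S} ≤ #E * (#s - 2).choose (k - 2) := by
  calc ∑ S ∈ powersetCard k s, #{e ∈ E | e.image f ⊆ S}
      = ∑ e ∈ E, #{S ∈ powersetCard k s | e.image f ⊆ S} := by
        simp only [card_eq_sum_ones, sum_filter]
        exact sum_comm
    _ ≤ ∑ e ∈ E, (#s - 2).choose (k - 2) := sum_le_sum fun e he => ?_
    _ = #E * (#s - 2).choose (k - 2) := by rw [sum_const, smul_eq_mul]
  obtain ⟨u, hu, w, hw, huw, hus, hws⟩ := hE e he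
  have hpair : {f u, f w} ⊆ e.image f :=
    insert_subset (mem_image_of_mem f hu) (singleton_subset_iff.2 (mem_image_of_mem f hw))
  calc #{S ∈ powersetCard k s | e.image f ⊆ S}
      ≤ #{S ∈ powersetCard k s | {f u, f w} ⊆ S} :=
        card_le_card (monotone_filter_right _ fun S _ heS => hpair.trans heS)
    _ = (#s - 2).choose (k - 2) := by
        rw [card_filter_powersetCard_superset (insert_subset hus (singleton_subset_iff.2 hws))
          (by rw [card_pair huw]; omega), card_pair huw]

end DoubleCounting

theorem mul_le_mul_of_mul_choose_le {n m q k : ℕ} (hk : 2 ≤ k) (hkq : k ≤ q)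
    (h : n * (q - 1).choose (k - 1) ≤ m * (q - 2).choose (k - 2)) :
    n * (q - 1) ≤ m * (k - 1) := by
  have hchoose : (q - 1) * (q - 2).choose (k - 2) = (q - 1).choose (k - 1) * (k - 1) := by
    have := Nat.add_one_mul_choose_eq (q - 2) (k - 2)
    rwa [show q - 2 + 1 = q - 1 by omega, show k - 2 + 1 = k - 1 by omega] at this
  refine Nat.le_of_mul_le_mul_right ?_ (Nat.choose_pos (by omega : k - 2 ≤ q - 2))
  calc n * (q - 1) * (q - 2).choose (k - 2) = n * (q - 1).choose (k - 1) * (k - 1) := by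
        rw [mul_assoc, hchoose, mul_assoc]
    _ ≤ m * (q - 2).choose (k - 2) * (k - 1) := Nat.mul_le_mul_right _ h
    _ = m * (k - 1) * (q - 2).choose (k - 2) := by ring

lemma exists_ne_of_forall_not_subset {V κ : Type*} [Fintype V] [DecidableEq κ] (φ : V → κ)
    {E : Finset (Finset V)}
    (hφ : ∀ c, ∀ e ∈ E, ¬ e ⊆ ({v | φ v = c} : Finset V)) {e : Finset V} (he : e ∈ E)
    (hne : e.Nonempty) :
    ∃ u ∈ e, ∃ w ∈ e, φ u ≠ φ w := by
  obtain ⟨u, hu⟩ := hne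
  by_contra! h
  exact hφ (φ u) e he fun w hw => mem_filter.2 ⟨mem_univ w, (h u hu w hw).symm⟩

theorem card_mul_le_of_forall_powersetCard_le {V : Type*} {q k : ℕ}
    (φ : V → Fin q) (A : Finset V) (E : Finset (Finset V)) (hk : 2 ≤ k) (hkq : k ≤ q)
    (hS : ∀ S ∈ powersetCard k univ, #{v ∈ A | φ v ∈ S} ≤ #{e ∈ E | e.image φ ⊆ S})
    (hE : ∀ e ∈ E, ∃ u ∈ e, ∃ w ∈ e, φ u ≠ φ w) :
    #A * (q - 1) ≤ #E * (k - 1) := by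
  have hvert := sum_powersetCard_card_filter_mem φ univ A (fun v _ => mem_univ _) (k := k)
    (by omega)
  have hedges := sum_powersetCard_card_filter_image_subset_le φ univ E
    (fun e he => (hE e he).imp fun u ⟨hu, w, hw, huw⟩ =>
      ⟨hu, w, hw, huw, mem_univ _, mem_univ _⟩) hk
  rw [card_fin] at hvert hedges
  exact mul_le_mul_of_mul_choose_le hk hkq (hvert ▸ (sum_le_sum hS).trans hedges)

theorem edges_lower_bound_of_balanced_chromatic_general {V : Type*} [Fintype V] [DecidableEq V]
    (r n q : ℕ) (hr : 2 ≤ r) (parts : Fin r → Finset V) (E : Finset (Finset V))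
    (hcard : ∀ i, (parts i).card = n)
    (hdisj : ∀ i j, i ≠ j → Disjoint (parts i) (parts j))
    (hedge : ∀ e ∈ E, ∀ i, (e ∩ parts i).card = 1)
    (hq3 : 3 ≤ q)
    (hcol : HasBalancedColoring parts E q)
    (hmin : ¬ HasBalancedColoring parts E (q - 1)) :
    ((q : ℚ) - 1) * n / (r * (r - 1)) ≤ (E.card : ℚ) := by
  obtain ⟨φ, hφ⟩ := hcol
  have hφ : ∀ c, IsBalancedIndepSet parts E {v | φ v = c} := hφ
  have hE : ∀ e ∈ E, ∀ i, (e ∩ parts i).Nonempty := fun e he i =>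
    card_pos.1 (by rw [hedge e he i]; exact one_pos)
  let i₀ : Fin r := ⟨0, by omega⟩
  have hkey : ∀ S ∈ powersetCard 3 univ,
      #{v ∈ parts i₀ | φ v ∈ S} ≤ #{e ∈ E | e.image φ ⊆ S} := fun S hS => by
    by_contra! h
    exact hmin (hasBalancedColoring_sub_one_of_card_lt parts E hr (fun i j h => hdisj i j h) hE
      φ hφ (mem_powersetCard.1 hS).2.ge i₀ h)
  have hcount := card_mul_le_of_forall_powersetCard_le φ (parts i₀) E (by norm_num) hq3 hkey
    fun e he => exists_ne_of_forall_not_subset φ (fun c => (hφ c).1) he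
      ((hE e he i₀).mono inter_subset_left)
  rw [hcard] at hcount
  have hcount' : ((q : ℚ) - 1) * n ≤ 2 * #E := by
    have := (Nat.cast_le (α := ℚ)).2 hcount
    push_cast [Nat.cast_sub (by omega : 1 ≤ q)] at this
    linarith
  have hr' : (2 : ℚ) ≤ r * (r - 1) := by
    have : (2 : ℚ) ≤ r := by exact_mod_cast hr
    nlinarith
  rw [div_le_iff₀ (by linarith)]
  nlinarith

/-- If an `n`-balanced `r`-uniform `r`-partite hypergraph has balanced chromatic number
exactly `q` with `3 ≤ q < ∞`, then it has at least `(q-1)n/(r(r-1))` edges. -/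
theorem edges_lower_bound_of_balanced_chromatic {V : Type*} [Fintype V] [DecidableEq V]
    (r n q : ℕ) (hr : 2 ≤ r) (parts : Fin r → Finset V) (E : Finset (Finset V))
    (hcard : ∀ i, (parts i).card = n)
    (hdisj : ∀ i j, i ≠ j → Disjoint (parts i) (parts j))
    (hcover : Finset.univ.biUnion parts = (Finset.univ : Finset V))
    (hedge : ∀ e ∈ E, ∀ i, (e ∩ parts i).card = 1)
    (hq3 : 3 ≤ q)
    (hcol : HasBalancedColoring parts E q)
    (hmin : ¬ HasBalancedColoring parts E (q - 1)) :
    ((q : ℚ) - 1) * n / (r * (r - 1)) ≤ (E.card : ℚ) :=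
  edges_lower_bound_of_balanced_chromatic_general r n q hr parts E hcard hdisj hedge hq3 hcol hmin
end

section
/- An r-uniform r-partite hypergraph H with parts V_1, ..., V_r each of size n admits a balanced coloring if and only if its r-partite complement admits a perfect matching. -/
/-- An `r`-uniform `r`-partite hypergraph with parts of size `n` admits a balanced
coloring iff its `r`-partite complement admits a perfect matching. -/
theorem balanced_colorable_iff_complement_perfect_matching
    {V : Type*} [Fintype V] [DecidableEq V]
    (r n : ℕ) (parts : Fin r → Finset V) (E : Finset (Finset V))
    (hcard : ∀ i, (parts i).card = n)
    (hdisj : ∀ i j, i ≠ j → Disjoint (parts i) (parts j))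
    (hcover : Finset.univ.biUnion parts = (Finset.univ : Finset V))
    (hedge : ∀ e ∈ E, ∀ i, (e ∩ parts i).card = 1) :
    (∃ q : ℕ, HasBalancedColoring parts E q) ↔
      (∃ M : Finset (Finset V),
        (∀ e ∈ M, (∀ i, (e ∩ parts i).card = 1) ∧ e ∉ E) ∧
        (∀ e ∈ M, ∀ f ∈ M, e ≠ f → Disjoint e f) ∧
        (∀ v : V, ∃ e ∈ M, v ∈ e)) := by
  classical
  by_cases hV : IsEmpty V
  · constructor
    · intro _
      exact ⟨∅, by simp, by simp, fun v => (hV.false v).elim⟩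
    · intro _
      exact ⟨0, ⟨fun v => (hV.false v).elim, fun c => c.elim0⟩⟩
  · rw [not_isEmpty_iff] at hV
    obtain ⟨v₀⟩ := hV
    have hpart' : ∀ v : V, ∃ i, v ∈ parts i := by
      intro v
      have hv : v ∈ Finset.univ.biUnion parts := by rw [hcover]; exact Finset.mem_univ v
      simpa using Finset.mem_biUnion.mp hv
    choose part hpartmem using hpart'
    have part_uniq : ∀ v i, v ∈ parts i → i = part v := by
      intro v i hi
      by_contra hne
      exact (Finset.disjoint_left.mp (hdisj i (part v) hne)) hi (hpartmem v)
    set i₀ : Fin r := part v₀ with hi₀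
    have eq_of_subset : ∀ f e : Finset V, (∀ i, (f ∩ parts i).card = 1) →
        (∀ i, (e ∩ parts i).card = 1) → f ⊆ e → f = e := by
      intro f e hf he hfe
      have hfi : ∀ i, f ∩ parts i = e ∩ parts i := fun i =>
        Finset.eq_of_subset_of_card_le (Finset.inter_subset_inter hfe Finset.Subset.rfl)
          (by rw [hf, he])
      calc f = f ∩ Finset.univ := (Finset.inter_univ f).symm
        _ = f ∩ Finset.univ.biUnion parts := by rw [hcover]
        _ = Finset.univ.biUnion (fun i => f ∩ parts i) := by
              rw [Finset.inter_biUnion]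
        _ = Finset.univ.biUnion (fun i => e ∩ parts i) := by
              exact Finset.biUnion_congr rfl (fun i _ => hfi i)
        _ = e ∩ Finset.univ.biUnion parts := by rw [Finset.inter_biUnion]
        _ = e := by rw [hcover, Finset.inter_univ]
    constructor
    · rintro ⟨q, φ, hφ⟩
      set S : Fin q → Fin r → Finset V :=
        fun c i => Finset.univ.filter (fun v => φ v = c) ∩ parts i with hS
      set m : Fin q → ℕ := fun c => (S c i₀).card with hm
      have hcardS : ∀ c i, (S c i).card = m c := fun c i => (hφ c).2 i i₀
      let e : (c : Fin q) → (i : Fin r) → {x // x ∈ S c i} ≃ Fin (m c) :=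
        fun c i => (S c i).equivFinOfCardEq (hcardS c i)
      let edge : (c : Fin q) → Fin (m c) → Finset V :=
        fun c k => Finset.univ.image (fun i => ((e c i).symm k : V))
      have hmemS : ∀ c i (k : Fin (m c)), ((e c i).symm k : V) ∈ S c i :=
        fun c i k => ((e c i).symm k).2
      have hφmem : ∀ c i (k : Fin (m c)),
          φ (((e c i).symm k : V)) = c ∧ ((e c i).symm k : V) ∈ parts i := by
        intro c i k
        have h := hmemS c i k
        simp only [hS, Finset.mem_inter, Finset.mem_filter, Finset.mem_univ, true_and] at h
        exact h
      have hedgeinter : ∀ c (k : Fin (m c)) i,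
          edge c k ∩ parts i = {((e c i).symm k : V)} := by
        intro c k i
        ext v
        simp only [edge, Finset.mem_inter, Finset.mem_image, Finset.mem_univ, true_and,
          Finset.mem_singleton]
        constructor
        · rintro ⟨⟨j, rfl⟩, hv⟩
          have h1 : j = part _ := part_uniq _ _ (hφmem c j k).2
          have h2 : i = part _ := part_uniq _ _ hv
          rw [h1.trans h2.symm]
        · rintro rfl
          exact ⟨⟨i, rfl⟩, (hφmem c i k).2⟩
      have hedgesub : ∀ c (k : Fin (m c)),
          edge c k ⊆ Finset.univ.filter (fun v => φ v = c) := by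
        intro c k v hv
        simp only [edge, Finset.mem_image, Finset.mem_univ, true_and] at hv
        obtain ⟨i, rfl⟩ := hv
        simp [(hφmem c i k).1]
      have hvS : ∀ v : V, v ∈ S (φ v) (part v) := by
        intro v
        have h : v ∈ Finset.univ.filter (fun w => φ w = φ v) ∩ parts (part v) :=
          Finset.mem_inter.mpr ⟨by simp, hpartmem v⟩
        exact h
      have hvedge : ∀ v : V, v ∈ edge (φ v) ((e (φ v) (part v)) ⟨v, hvS v⟩) := by
        intro v
        simp only [edge, Finset.mem_image, Finset.mem_univ, true_and]
        exact ⟨part v, by simp⟩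
      have hkey : ∀ (c c' : Fin q) (k : Fin (m c)) (k' : Fin (m c')) (v : V),
          v ∈ edge c k → v ∈ edge c' k' → edge c k = edge c' k' := by
        intro c c' k k' v hv hv'
        simp only [edge, Finset.mem_image, Finset.mem_univ, true_and] at hv hv'
        obtain ⟨i, hi⟩ := hv
        obtain ⟨j, hj⟩ := hv'
        have hc : c = c' := by
          rw [← (hφmem c i k).1, ← (hφmem c' j k').1, hi, hj]
        subst hc
        have hij : i = j := by
          have h1 : i = part v := part_uniq v i (hi ▸ (hφmem c i k).2)
          have h2 : j = part v := part_uniq v j (hj ▸ (hφmem c j k').2)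
          rw [h1, h2]
        subst hij
        have hk : k = k' := by
          have hsub : (e c i).symm k = (e c i).symm k' :=
            Subtype.coe_injective (hi.trans hj.symm)
          exact (e c i).symm.injective hsub
        rw [hk]
      refine ⟨(Finset.univ : Finset (Σ c : Fin q, Fin (m c))).image
        (fun p => edge p.1 p.2), ?_, ?_, ?_⟩
      · intro f hf
        simp only [Finset.mem_image, Finset.mem_univ, true_and] at hf
        obtain ⟨⟨c, k⟩, rfl⟩ := hf
        refine ⟨fun i => by rw [hedgeinter]; simp, ?_⟩
        intro hE
        exact (hφ c).1 _ hE (hedgesub c k)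
      · intro f hf g hg hne
        simp only [Finset.mem_image, Finset.mem_univ, true_and] at hf hg
        obtain ⟨⟨c, k⟩, rfl⟩ := hf
        obtain ⟨⟨c', k'⟩, rfl⟩ := hg
        by_contra hnd
        obtain ⟨v, hv1, hv2⟩ := Finset.not_disjoint_iff.mp hnd
        exact hne (hkey c c' k k' v hv1 hv2)
      · intro v
        refine ⟨edge (φ v) ((e (φ v) (part v)) ⟨v, hvS v⟩), ?_, hvedge v⟩
        simp only [Finset.mem_image, Finset.mem_univ, true_and]
        exact ⟨⟨φ v, (e (φ v) (part v)) ⟨v, hvS v⟩⟩, rfl⟩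
    · rintro ⟨M, hM1, hM2, hM3⟩
      choose em hemM hemv using hM3
      have em_eq : ∀ (v : V) (f : Finset V), f ∈ M → v ∈ f → f = em v := by
        intro v f hf hvf
        by_contra hne
        exact (Finset.disjoint_left.mp (hM2 f hf (em v) (hemM v) hne)) hvf (hemv v)
      refine ⟨M.card, ⟨fun v => M.equivFin ⟨em v, hemM v⟩, ?_⟩⟩
      intro c
      set e₀ : Finset V := (M.equivFin.symm c : Finset V) with he₀
      have he₀M : e₀ ∈ M := (M.equivFin.symm c).2
      have hfilter : Finset.univ.filter
          (fun v => M.equivFin ⟨em v, hemM v⟩ = c) = e₀ := by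
        ext v
        simp only [Finset.mem_filter, Finset.mem_univ, true_and]
        constructor
        · intro h
          have h2 : (⟨em v, hemM v⟩ : {x // x ∈ M}) = M.equivFin.symm c := by
            rw [← h, Equiv.symm_apply_apply]
          have h3 : em v = e₀ := congrArg Subtype.val h2
          exact h3 ▸ hemv v
        · intro hv
          have h1 : e₀ = em v := em_eq v e₀ he₀M hv
          have h2 : (⟨em v, hemM v⟩ : {x // x ∈ M}) = M.equivFin.symm c :=
            Subtype.ext h1.symm
          rw [h2, Equiv.apply_symm_apply]
      rw [hfilter]
      refine ⟨?_, ?_⟩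
      · intro f hf hsub
        have heq := eq_of_subset f e₀ (hedge f hf) (hM1 e₀ he₀M).1 hsub
        exact (hM1 e₀ he₀M).2 (heq ▸ hf)
      · intro i j
        rw [(hM1 e₀ he₀M).1 i, (hM1 e₀ he₀M).1 j]
end

section
/- Let H be an n-balanced r-uniform r-partite hypergraph and let J_1, ..., J_q (q ≥ 3) be the color classes of a balanced q-coloring witnessing χ_b(H) = q. Then for all 1 ≤ i < j < k ≤ q, the number of edges of H induced on J_i ∪ J_j ∪ J_k is at least |J_i ∩ V_1| + |J_j ∩ V_1| + |J_k ∩ V_1|. -/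
set_option linter.unusedSectionVars false

open Finset

section Graph

variable {ι V : Type*} [DecidableEq ι] [DecidableEq V]

/-- two edge-indices share an endpoint, within F -/
def shareRel (p0 p1 : ι → V) (F : Finset ι) (a b : ι) : Prop :=
  a ∈ F ∧ b ∈ F ∧ (p0 a = p0 b ∨ p1 a = p1 b)

def reachN (p0 p1 : ι → V) (F : Finset ι) (f : ι) : ℕ → ι → Prop
  | 0, e => e = f
  | n+1, e => ∃ g, reachN p0 p1 F f n g ∧ shareRel p0 p1 F g e

lemma reach_exists_reachN {p0 p1 : ι → V} {F : Finset ι} {f e : ι}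
    (h : Relation.ReflTransGen (shareRel p0 p1 F) f e) :
    ∃ n, reachN p0 p1 F f n e := by
  induction h with
  | refl => exact ⟨0, rfl⟩
  | tail hab hbc ih => obtain ⟨n, hn⟩ := ih; exact ⟨n+1, _, hn, hbc⟩

lemma treeBound (p0 p1 : ι → V) :
    ∀ F : Finset ι, ∀ f ∈ F, (∀ a ∈ F, ∀ b ∈ F, p0 a ≠ p1 b) →
      (∀ e ∈ F, Relation.ReflTransGen (shareRel p0 p1 F) f e) →
      (F.image p0).card + (F.image p1).card ≤ F.card + 1 := by
  intro F
  induction F using Finset.strongInduction with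
  | _ F ih =>
    intro f hf hd hconn
    classical
    rcases le_or_gt F.card 1 with hc1 | hc1
    · have hF : F = {f} := by
        apply Finset.eq_singleton_iff_unique_mem.2
        refine ⟨hf, fun x hx => ?_⟩
        by_contra hne
        have : ({x, f} : Finset ι) ⊆ F := by
          intro y hy; simp at hy; rcases hy with rfl | rfl <;> assumption
        have := Finset.card_le_card this
        rw [Finset.card_pair hne] at this
        omega
      subst hF
      simp
    · -- distance function
      have hex : ∀ e ∈ F, ∃ n, reachN p0 p1 F f n e := fun e he =>
        reach_exists_reachN (hconn e he)
      set d : ι → ℕ := fun e =>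
        if h : ∃ n, reachN p0 p1 F f n e then Nat.find h else 0 with hd_def
      have hdspec : ∀ e ∈ F, reachN p0 p1 F f (d e) e := by
        intro e he
        have h := hex e he
        simp only [hd_def, dif_pos h]
        exact Nat.find_spec h
      have hdmin : ∀ e ∈ F, ∀ n, reachN p0 p1 F f n e → d e ≤ n := by
        intro e he n hn
        have h := hex e he
        simp only [hd_def, dif_pos h]
        exact Nat.find_le hn
      have hdf : d f = 0 := by
        have h0 : reachN p0 p1 F f 0 f := rfl
        have := hdmin f hf 0 h0; omega
      -- pick max-distance element among F.erase f
      have hne : (F.erase f).Nonempty := by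
        rw [← Finset.card_pos, Finset.card_erase_of_mem hf]; omega
      obtain ⟨estar, hestar, hmax⟩ := Finset.exists_max_image (F.erase f) d hne
      have hesF : estar ∈ F := Finset.mem_of_mem_erase hestar
      have hesne : estar ≠ f := Finset.ne_of_mem_erase hestar
      have hdpos : 1 ≤ d estar := by
        by_contra h
        have h0 : d estar = 0 := by omega
        have := hdspec estar hesF
        rw [h0] at this
        exact hesne this
      -- predecessor of estar
      obtain ⟨n0, hn0⟩ : ∃ n0, d estar = n0 + 1 := ⟨d estar - 1, by omega⟩
      have hstep := hdspec estar hesF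
      rw [hn0] at hstep
      obtain ⟨gpred, hg1, hg2⟩ := hstep
      have hgF : gpred ∈ F := hg2.1
      have hdg : d gpred ≤ n0 := hdmin gpred hgF n0 hg1
      have hgne : gpred ≠ estar := by
        intro h; rw [h] at hdg; omega
      have hgmem : gpred ∈ F.erase estar := Finset.mem_erase.2 ⟨hgne, hgF⟩
      -- connectivity of F.erase estar
      have hmax' : ∀ e ∈ F, e ≠ estar → d e ≤ d estar := by
        intro e he hne'
        rcases eq_or_ne e f with rfl | hef
        · omega
        · exact hmax e (Finset.mem_erase.2 ⟨hef, he⟩)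
      have hconn' : ∀ e ∈ F.erase estar,
          Relation.ReflTransGen (shareRel p0 p1 (F.erase estar)) f e := by
        have key : ∀ n, ∀ e ∈ F.erase estar, d e = n →
            Relation.ReflTransGen (shareRel p0 p1 (F.erase estar)) f e := by
          intro n
          induction n using Nat.strong_induction_on with
          | _ n ihn =>
            intro e he hde
            have heF : e ∈ F := Finset.mem_of_mem_erase he
            rcases Nat.eq_zero_or_pos n with rfl | hn
            · have := hdspec e heF
              rw [hde] at this
              rw [this]
            · obtain ⟨n1, rfl⟩ : ∃ n1, n = n1 + 1 := ⟨n - 1, by omega⟩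
              have hsp := hdspec e heF
              rw [hde] at hsp
              obtain ⟨g, hg1', hg2'⟩ := hsp
              have hgF' : g ∈ F := hg2'.1
              have hdg' : d g ≤ n1 := hdmin g hgF' n1 hg1'
              have hgnes : g ≠ estar := by
                intro h
                have hee : e ≠ estar := Finset.ne_of_mem_erase he
                have h1 : d e ≤ d estar := hmax' e heF hee
                rw [← h] at h1
                omega
              have hg_er : g ∈ F.erase estar := Finset.mem_erase.2 ⟨hgnes, hgF'⟩
              have ihg := ihn (d g) (by omega) g hg_er rfl
              exact ihg.tail ⟨hg_er, he, hg2'.2.2⟩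
        intro e he; exact key (d e) e he rfl
      have hsub : F.erase estar ⊂ F := Finset.erase_ssubset hesF
      have hfmem : f ∈ F.erase estar := Finset.mem_erase.2 ⟨Ne.symm hesne, hf⟩
      have hd' : ∀ a ∈ F.erase estar, ∀ b ∈ F.erase estar, p0 a ≠ p1 b :=
        fun a ha b hb => hd a (Finset.mem_of_mem_erase ha) b (Finset.mem_of_mem_erase hb)
      have IH := ih (F.erase estar) hsub f hfmem hd' hconn'
      have hFeq : F = insert estar (F.erase estar) := by
        rw [Finset.insert_erase hesF]
      have hcard' : F.card = (F.erase estar).card + 1 := by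
        rw [Finset.card_erase_of_mem hesF]
        have : 1 ≤ F.card := Finset.card_pos.2 ⟨f, hf⟩
        omega
      rcases hg2.2.2 with h0 | h1
      · -- p0 gpred = p0 estar : p0-image unchanged
        have him0 : F.image p0 = (F.erase estar).image p0 := by
          conv_lhs => rw [hFeq]
          rw [Finset.image_insert]
          apply Finset.insert_eq_self.2
          exact Finset.mem_image.2 ⟨gpred, hgmem, h0⟩
        have him1 : F.image p1 ⊆ insert (p1 estar) ((F.erase estar).image p1) := by
          conv_lhs => rw [hFeq]
          rw [Finset.image_insert]
        have h1c := Finset.card_le_card him1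
        have h2c := Finset.card_insert_le (p1 estar) ((F.erase estar).image p1)
        rw [him0]; omega
      · have him1 : F.image p1 = (F.erase estar).image p1 := by
          conv_lhs => rw [hFeq]
          rw [Finset.image_insert]
          apply Finset.insert_eq_self.2
          exact Finset.mem_image.2 ⟨gpred, hgmem, h1⟩
        have him0 : F.image p0 ⊆ insert (p0 estar) ((F.erase estar).image p0) := by
          conv_lhs => rw [hFeq]
          rw [Finset.image_insert]
        have h1c := Finset.card_le_card him0
        have h2c := Finset.card_insert_le (p0 estar) ((F.erase estar).image p0)
        rw [him1]; omega






/-- flip a proper coloring -/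
lemma flipQ (p0 p1 : ι → V) (F : Finset ι) (U W : Finset V)
    (hU : U ⊆ F.image p0) (hW : W ⊆ F.image p1)
    (hp : ∀ e ∈ F, (p0 e ∈ U ↔ p1 e ∉ W)) :
    (F.image p0 \ U ⊆ F.image p0) ∧ (F.image p1 \ W ⊆ F.image p1) ∧
    (∀ e ∈ F, (p0 e ∈ F.image p0 \ U ↔ p1 e ∉ F.image p1 \ W)) ∧
    (F.image p0 \ (F.image p0 \ U)) = U ∧ (F.image p1 \ (F.image p1 \ W)) = W := by
  refine ⟨Finset.sdiff_subset, Finset.sdiff_subset, ?_, ?_, ?_⟩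
  · intro e he
    have h0 : p0 e ∈ F.image p0 := Finset.mem_image.2 ⟨e, he, rfl⟩
    have h1 : p1 e ∈ F.image p1 := Finset.mem_image.2 ⟨e, he, rfl⟩
    simp only [Finset.mem_sdiff, h0, h1, true_and, not_and, not_not]
    rw [hp e he]; tauto
  · rw [Finset.sdiff_sdiff_self_left,
      Finset.inter_eq_right.2 hU]
  · rw [Finset.sdiff_sdiff_self_left,
      Finset.inter_eq_right.2 hW]

lemma mainQ (p0 p1 : ι → V) :
    ∀ F : Finset ι, (∀ a ∈ F, ∀ b ∈ F, p0 a ≠ p1 b) →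
    ∃ U W : Finset V, U ⊆ F.image p0 ∧ W ⊆ F.image p1 ∧
      (∀ e ∈ F, (p0 e ∈ U ↔ p1 e ∉ W)) ∧
      U.card + ((F.image p1) \ W).card + ((F.image p0).card + (F.image p1).card)
        ≤ ((F.image p0) \ U).card + W.card + 2 * F.card + 2 ∧
      ((F.image p0) \ U).card + W.card + ((F.image p0).card + (F.image p1).card)
        ≤ U.card + ((F.image p1) \ W).card + 2 * F.card + 2 := by
  intro F
  induction F using Finset.strongInduction with
  | _ F ih =>
    intro hd
    classical
    rcases Finset.eq_empty_or_nonempty F with rfl | ⟨f, hf⟩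
    · exact ⟨∅, ∅, by simp⟩
    set C : Finset ι := F.filter
      (fun e => Relation.ReflTransGen (shareRel p0 p1 F) f e) with hC_def
    have hCF : C ⊆ F := Finset.filter_subset _ _
    have hfC : f ∈ C := by
      rw [hC_def, Finset.mem_filter]; exact ⟨hf, Relation.ReflTransGen.refl⟩
    -- closure property
    have hclosed : ∀ e ∈ C, ∀ e' ∈ F, (p0 e = p0 e' ∨ p1 e = p1 e') → e' ∈ C := by
      intro e he e' he' hsh
      rw [hC_def, Finset.mem_filter] at he ⊢
      exact ⟨he', he.2.tail ⟨he.1, he', hsh⟩⟩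
    by_cases hFC : F ⊆ C
    · -- connected case
      have hCeq : C = F := Finset.Subset.antisymm hCF hFC
      have hconn : ∀ e ∈ F, Relation.ReflTransGen (shareRel p0 p1 F) f e := by
        intro e he
        have := hFC he
        rw [hC_def, Finset.mem_filter] at this
        exact this.2
      have hT := treeBound p0 p1 F f hf hd hconn
      refine ⟨F.image p0, ∅, Finset.Subset.refl _, Finset.empty_subset _, ?_, ?_, ?_⟩
      · intro e he
        simp [Finset.mem_image.2 ⟨e, he, rfl⟩]
      · simp only [Finset.sdiff_empty, Finset.sdiff_self, Finset.card_empty]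
        omega
      · simp only [Finset.sdiff_empty, Finset.sdiff_self, Finset.card_empty]
        omega
    · -- split case
      set G : Finset ι := F \ C with hG_def
      have hGF : G ⊆ F := Finset.sdiff_subset
      have hCG : Disjoint C G := Finset.disjoint_sdiff
      have hFeq : F = C ∪ G := by
        rw [hG_def, Finset.union_sdiff_of_subset hCF]
      have hCss : C ⊂ F := Finset.ssubset_iff_subset_ne.2 ⟨hCF, fun h => hFC h.ge⟩
      have hGss : G ⊂ F := by
        apply Finset.ssubset_iff_subset_ne.2
        refine ⟨hGF, fun h => ?_⟩
        have hf' : f ∈ G := h.symm ▸ hf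
        exact (Finset.mem_sdiff.1 hf').2 hfC
      -- image disjointness
      have him0 : Disjoint (C.image p0) (G.image p0) := by
        rw [Finset.disjoint_left]
        rintro x hx hx'
        obtain ⟨e, he, rfl⟩ := Finset.mem_image.1 hx
        obtain ⟨e', he', heq⟩ := Finset.mem_image.1 hx'
        have : e' ∈ C := hclosed e he e' (hGF he') (Or.inl heq.symm)
        exact (Finset.mem_sdiff.1 he').2 this
      have him1 : Disjoint (C.image p1) (G.image p1) := by
        rw [Finset.disjoint_left]
        rintro x hx hx'
        obtain ⟨e, he, rfl⟩ := Finset.mem_image.1 hx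
        obtain ⟨e', he', heq⟩ := Finset.mem_image.1 hx'
        have : e' ∈ C := hclosed e he e' (hGF he') (Or.inr heq.symm)
        exact (Finset.mem_sdiff.1 he').2 this
      have hdC : ∀ a ∈ C, ∀ b ∈ C, p0 a ≠ p1 b := fun a ha b hb => hd a (hCF ha) b (hCF hb)
      have hdG : ∀ a ∈ G, ∀ b ∈ G, p0 a ≠ p1 b := fun a ha b hb => hd a (hGF ha) b (hGF hb)
      -- get coloring of C with y ≤ x
      obtain ⟨U1, W1, hU1, hW1, hp1, hb11, hb12⟩ := ih C hCss hdC
      obtain ⟨U2, W2, hU2, hW2, hp2, hb21, hb22⟩ := ih G hGss hdG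
      have hflipC := flipQ p0 p1 C U1 W1 hU1 hW1 hp1
      have hflipG := flipQ p0 p1 G U2 W2 hU2 hW2 hp2
      -- choose orientations: want yC ≤ xC and xG ≤ yG where
      -- x = |U| + |imp1 \ W|, y = |imp0 \ U| + |W|
      have hCchoice : ∃ U1' W1', U1' ⊆ C.image p0 ∧ W1' ⊆ C.image p1 ∧
          (∀ e ∈ C, (p0 e ∈ U1' ↔ p1 e ∉ W1')) ∧
          U1'.card + ((C.image p1) \ W1').card + ((C.image p0).card + (C.image p1).card)
            ≤ ((C.image p0) \ U1').card + W1'.card + 2 * C.card + 2 ∧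
          ((C.image p0) \ U1').card + W1'.card ≤ U1'.card + ((C.image p1) \ W1').card := by
        rcases le_total (((C.image p0) \ U1).card + W1.card)
            (U1.card + ((C.image p1) \ W1).card) with h | h
        · exact ⟨U1, W1, hU1, hW1, hp1, hb11, h⟩
        · refine ⟨C.image p0 \ U1, C.image p1 \ W1, hflipC.1, hflipC.2.1,
            hflipC.2.2.1, ?_, ?_⟩
          · rw [hflipC.2.2.2.1, hflipC.2.2.2.2]; omega
          · rw [hflipC.2.2.2.1, hflipC.2.2.2.2]; omega
      have hGchoice : ∃ U2' W2', U2' ⊆ G.image p0 ∧ W2' ⊆ G.image p1 ∧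
          (∀ e ∈ G, (p0 e ∈ U2' ↔ p1 e ∉ W2')) ∧
          ((G.image p0) \ U2').card + W2'.card + ((G.image p0).card + (G.image p1).card)
            ≤ U2'.card + ((G.image p1) \ W2').card + 2 * G.card + 2 ∧
          U2'.card + ((G.image p1) \ W2').card ≤ ((G.image p0) \ U2').card + W2'.card := by
        rcases le_total (U2.card + ((G.image p1) \ W2).card)
            (((G.image p0) \ U2).card + W2.card) with h | h
        · exact ⟨U2, W2, hU2, hW2, hp2, hb22, h⟩
        · refine ⟨G.image p0 \ U2, G.image p1 \ W2, hflipG.1, hflipG.2.1,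
            hflipG.2.2.1, ?_, ?_⟩
          · rw [hflipG.2.2.2.1, hflipG.2.2.2.2]; omega
          · rw [hflipG.2.2.2.1, hflipG.2.2.2.2]; omega
      obtain ⟨U1, W1, hU1, hW1, hp1, hbC, hyxC⟩ := hCchoice
      obtain ⟨U2, W2, hU2, hW2, hp2, hbG, hxyG⟩ := hGchoice
      -- combine
      have himF0 : F.image p0 = C.image p0 ∪ G.image p0 := by
        rw [hFeq, Finset.image_union]
      have himF1 : F.image p1 = C.image p1 ∪ G.image p1 := by
        rw [hFeq, Finset.image_union]
      have hUdisj : Disjoint U1 U2 := him0.mono hU1 hU2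
      have hWdisj : Disjoint W1 W2 := him1.mono hW1 hW2
      refine ⟨U1 ∪ U2, W1 ∪ W2, ?_, ?_, ?_, ?_, ?_⟩
      · rw [himF0]; exact Finset.union_subset_union hU1 hU2
      · rw [himF1]; exact Finset.union_subset_union hW1 hW2
      · intro e he
        rw [hFeq, Finset.mem_union] at he
        rcases he with he | he
        · have e0C : p0 e ∈ C.image p0 := Finset.mem_image.2 ⟨e, he, rfl⟩
          have e1C : p1 e ∈ C.image p1 := Finset.mem_image.2 ⟨e, he, rfl⟩
          have h2 : p0 e ∉ U2 := fun h => (Finset.disjoint_left.1 him0) e0C (hU2 h)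
          have h2' : p1 e ∉ W2 := fun h => (Finset.disjoint_left.1 him1) e1C (hW2 h)
          simp only [Finset.mem_union]
          have := hp1 e he; tauto
        · have e0G : p0 e ∈ G.image p0 := Finset.mem_image.2 ⟨e, he, rfl⟩
          have e1G : p1 e ∈ G.image p1 := Finset.mem_image.2 ⟨e, he, rfl⟩
          have h2 : p0 e ∉ U1 := fun h => (Finset.disjoint_left.1 him0) (hU1 h) e0G
          have h2' : p1 e ∉ W1 := fun h => (Finset.disjoint_left.1 him1) (hW1 h) e1G
          simp only [Finset.mem_union]
          have := hp2 e he; tauto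
      all_goals {
        have hcardF : F.card = C.card + G.card := by
          rw [hFeq, Finset.card_union_of_disjoint hCG]
        have hc0 : (F.image p0).card = (C.image p0).card + (G.image p0).card := by
          rw [himF0, Finset.card_union_of_disjoint him0]
        have hc1 : (F.image p1).card = (C.image p1).card + (G.image p1).card := by
          rw [himF1, Finset.card_union_of_disjoint him1]
        have hcU : (U1 ∪ U2).card = U1.card + U2.card :=
          Finset.card_union_of_disjoint hUdisj
        have hcW : (W1 ∪ W2).card = W1.card + W2.card :=
          Finset.card_union_of_disjoint hWdisj
        have hsd0 : (F.image p0) \ (U1 ∪ U2) = ((C.image p0) \ U1) ∪ ((G.image p0) \ U2) := by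
          ext x
          simp only [Finset.mem_sdiff, Finset.mem_union, not_or, himF0]
          constructor
          · rintro ⟨hA | hB, h1, h2⟩
            · exact Or.inl ⟨hA, h1⟩
            · exact Or.inr ⟨hB, h2⟩
          · rintro (⟨hA, h1⟩ | ⟨hB, h2⟩)
            · exact ⟨Or.inl hA, h1, fun h => Finset.disjoint_left.1 him0 hA (hU2 h)⟩
            · exact ⟨Or.inr hB, fun h => Finset.disjoint_left.1 him0 (hU1 h) hB, h2⟩
        have hsd1 : (F.image p1) \ (W1 ∪ W2) = ((C.image p1) \ W1) ∪ ((G.image p1) \ W2) := by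
          ext x
          simp only [Finset.mem_sdiff, Finset.mem_union, not_or, himF1]
          constructor
          · rintro ⟨hA | hB, h1, h2⟩
            · exact Or.inl ⟨hA, h1⟩
            · exact Or.inr ⟨hB, h2⟩
          · rintro (⟨hA, h1⟩ | ⟨hB, h2⟩)
            · exact ⟨Or.inl hA, h1, fun h => Finset.disjoint_left.1 him1 hA (hW2 h)⟩
            · exact ⟨Or.inr hB, fun h => Finset.disjoint_left.1 him1 (hW1 h) hB, h2⟩
        have hsd0c : ((F.image p0) \ (U1 ∪ U2)).card
            = ((C.image p0) \ U1).card + ((G.image p0) \ U2).card := by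
          rw [hsd0, Finset.card_union_of_disjoint
            (him0.mono Finset.sdiff_subset Finset.sdiff_subset)]
        have hsd1c : ((F.image p1) \ (W1 ∪ W2)).card
            = ((C.image p1) \ W1).card + ((G.image p1) \ W2).card := by
          rw [hsd1, Finset.card_union_of_disjoint
            (him1.mono Finset.sdiff_subset Finset.sdiff_subset)]
        have he1 : ((C.image p0) \ U1).card + U1.card = (C.image p0).card :=
          Finset.card_sdiff_add_card_eq_card hU1
        have he2 : ((C.image p1) \ W1).card + W1.card = (C.image p1).card :=
          Finset.card_sdiff_add_card_eq_card hW1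
        have he3 : ((G.image p0) \ U2).card + U2.card = (G.image p0).card :=
          Finset.card_sdiff_add_card_eq_card hU2
        have he4 : ((G.image p1) \ W2).card + W2.card = (G.image p1).card :=
          Finset.card_sdiff_add_card_eq_card hW2
        have hi1 : (C.image p0).card ≤ C.card := Finset.card_image_le
        have hi2 : (C.image p1).card ≤ C.card := Finset.card_image_le
        have hi3 : (G.image p0).card ≤ G.card := Finset.card_image_le
        have hi4 : (G.image p1).card ≤ G.card := Finset.card_image_le
        omega
      }

end Graph

set_option maxHeartbeats 1000000 in
/-- Given a balanced `q`-coloring (`q ≥ 3`) of an `n`-balanced `r`-uniform `r`-partite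
hypergraph witnessing `χ_b = q` (no balanced `(q-1)`-coloring exists), any three color
classes `J i ∪ J j ∪ J k` induce at least `|Jᵢ ∩ V₁| + |Jⱼ ∩ V₁| + |J_k ∩ V₁|` edges. -/
theorem induced_edges_lower_bound_three_classes {V : Type*} [Fintype V] [DecidableEq V]
    (r n q : ℕ) (hr : 2 ≤ r) (parts : Fin r → Finset V) (E : Finset (Finset V))
    (hcard : ∀ i, (parts i).card = n)
    (hdisj : ∀ i j, i ≠ j → Disjoint (parts i) (parts j))
    (hcover : Finset.univ.biUnion parts = (Finset.univ : Finset V))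
    (hedge : ∀ e ∈ E, ∀ i, (e ∩ parts i).card = 1)
    (hq : 3 ≤ q) (φ : V → Fin q)
    (hind : ∀ c : Fin q, ∀ e ∈ E, ¬ e ⊆ Finset.univ.filter (fun v => φ v = c))
    (hbal : ∀ c : Fin q, ∀ i j,
      ((Finset.univ.filter (fun v => φ v = c)) ∩ parts i).card
        = ((Finset.univ.filter (fun v => φ v = c)) ∩ parts j).card)
    (hmin : ¬ ∃ ψ : V → Fin (q - 1), ∀ c : Fin (q - 1),
      (∀ e ∈ E, ¬ e ⊆ Finset.univ.filter (fun v => ψ v = c)) ∧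
      (∀ i j, ((Finset.univ.filter (fun v => ψ v = c)) ∩ parts i).card
            = ((Finset.univ.filter (fun v => ψ v = c)) ∩ parts j).card)) :
    ∀ i j k : Fin q, i < j → j < k →
      ((Finset.univ.filter (fun v => φ v = i)) ∩ parts ⟨0, by omega⟩).card +
      ((Finset.univ.filter (fun v => φ v = j)) ∩ parts ⟨0, by omega⟩).card +
      ((Finset.univ.filter (fun v => φ v = k)) ∩ parts ⟨0, by omega⟩).card ≤
      (E.filter (fun e => e ⊆
        (Finset.univ.filter (fun v => φ v = i)) ∪
        (Finset.univ.filter (fun v => φ v = j)) ∪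
        (Finset.univ.filter (fun v => φ v = k)))).card := by
  intro i j k hij hjk
  by_contra hcon
  push_neg at hcon
  classical
  have hr0 : (0:ℕ) < r := by omega
  have hr1 : (1:ℕ) < r := by omega
  set P0 : Fin r := ⟨0, hr0⟩ with hP0_def
  set P1 : Fin r := ⟨1, hr1⟩ with hP1_def
  have hP01 : P0 ≠ P1 := by
    intro h
    have := congrArg Fin.val h
    simp [hP0_def, hP1_def] at this
  set J : Fin q → Finset V := fun c => Finset.univ.filter (fun v => φ v = c) with hJ_def
  set Wt : Finset V := J i ∪ J j ∪ J k with hW_def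
  set E' : Finset (Finset V) := E.filter (fun e => e ⊆ Wt) with hE'_def
  have hmemJ : ∀ (v : V) (c : Fin q), v ∈ J c ↔ φ v = c := by
    intro v c; simp [hJ_def]
  have hmemW : ∀ v : V, v ∈ Wt ↔ (φ v = i ∨ φ v = j ∨ φ v = k) := by
    intro v; simp [hW_def, Finset.mem_union, hmemJ]
  have hbalJ : ∀ c : Fin q, ∀ l l' : Fin r,
      (J c ∩ parts l).card = (J c ∩ parts l').card := hbal
  have hindJ : ∀ c : Fin q, ∀ e ∈ E, ¬ e ⊆ J c := hind
  have hJd : ∀ c c' : Fin q, c ≠ c' → Disjoint (J c) (J c') := by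
    intro c c' h
    rw [Finset.disjoint_left]
    intro v hv hv'
    rw [hmemJ] at hv hv'
    exact h (hv ▸ hv')
  have hij' : i ≠ j := ne_of_lt hij
  have hjk' : j ≠ k := ne_of_lt hjk
  have hik' : i ≠ k := ne_of_lt (lt_trans hij hjk)
  have hcon2 : E'.card <
      (J i ∩ parts P0).card + (J j ∩ parts P0).card + (J k ∩ parts P0).card := hcon
  have hWcard : ∀ l : Fin r, (Wt ∩ parts l).card =
      (J i ∩ parts P0).card + (J j ∩ parts P0).card + (J k ∩ parts P0).card := by
    intro l
    have hsplit : Wt ∩ parts l = ((J i ∩ parts l) ∪ (J j ∩ parts l)) ∪ (J k ∩ parts l) := by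
      rw [hW_def, Finset.union_inter_distrib_right, Finset.union_inter_distrib_right]
    have hd1 : Disjoint (J i ∩ parts l) (J j ∩ parts l) :=
      (hJd i j hij').mono Finset.inter_subset_left Finset.inter_subset_left
    have hd2 : Disjoint ((J i ∩ parts l) ∪ (J j ∩ parts l)) (J k ∩ parts l) := by
      apply Finset.disjoint_union_left.2
      exact ⟨(hJd i k hik').mono Finset.inter_subset_left Finset.inter_subset_left,
        (hJd j k hjk').mono Finset.inter_subset_left Finset.inter_subset_left⟩
    rw [hsplit, Finset.card_union_of_disjoint hd2, Finset.card_union_of_disjoint hd1,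
      hbalJ i l P0, hbalJ j l P0, hbalJ k l P0]
  -- a vertex exists
  obtain ⟨v₀, hv₀⟩ : (Wt ∩ parts P0).Nonempty := by
    rw [← Finset.card_pos, hWcard P0]; omega
  -- edge vertex functions
  have hwex : ∀ e : Finset V, ∃ w : Fin r → V, e ∈ E' → ∀ l, e ∩ parts l = {w l} := by
    intro e
    by_cases he : e ∈ E'
    · have heE : e ∈ E := (Finset.mem_filter.1 he).1
      have h1 : ∀ l : Fin r, ∃ a, e ∩ parts l = {a} := fun l =>
        Finset.card_eq_one.1 (hedge e heE l)
      choose w hw using h1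
      exact ⟨w, fun _ l => hw l⟩
    · exact ⟨fun _ => v₀, fun h => absurd h he⟩
  choose wf hwf using hwex
  set q0 : Finset V → V := fun e => wf e P0 with hq0_def
  set q1 : Finset V → V := fun e => wf e P1 with hq1_def
  have hq0mem : ∀ e ∈ E', q0 e ∈ e ∧ q0 e ∈ parts P0 := by
    intro e he
    have h := hwf e he P0
    have hm : q0 e ∈ e ∩ parts P0 := by
      rw [h]; exact Finset.mem_singleton_self _
    exact ⟨(Finset.mem_inter.1 hm).1, (Finset.mem_inter.1 hm).2⟩
  have hq1mem : ∀ e ∈ E', q1 e ∈ e ∧ q1 e ∈ parts P1 := by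
    intro e he
    have h := hwf e he P1
    have hm : q1 e ∈ e ∩ parts P1 := by
      rw [h]; exact Finset.mem_singleton_self _
    exact ⟨(Finset.mem_inter.1 hm).1, (Finset.mem_inter.1 hm).2⟩
  have hd : ∀ a ∈ E', ∀ b ∈ E', q0 a ≠ q1 b := by
    intro a ha b hb heq
    have h1 := (hq0mem a ha).2
    have h2 := (hq1mem b hb).2
    rw [← heq] at h2
    exact Finset.disjoint_left.1 (hdisj P0 P1 hP01) h1 h2
  obtain ⟨U, W', hU, hW', hproper, hb1, hb2⟩ := mainQ q0 q1 E' hd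
  set imp0 : Finset V := E'.image q0 with himp0_def
  set imp1 : Finset V := E'.image q1 with himp1_def
  have himp0 : imp0 ⊆ Wt ∩ parts P0 := by
    intro x hx
    obtain ⟨e, he, rfl⟩ := Finset.mem_image.1 hx
    exact Finset.mem_inter.2
      ⟨(Finset.mem_filter.1 he).2 (hq0mem e he).1, (hq0mem e he).2⟩
  have himp1 : imp1 ⊆ Wt ∩ parts P1 := by
    intro x hx
    obtain ⟨e, he, rfl⟩ := Finset.mem_image.1 hx
    exact Finset.mem_inter.2
      ⟨(Finset.mem_filter.1 he).2 (hq1mem e he).1, (hq1mem e he).2⟩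
  have himp0c : imp0.card ≤ E'.card := Finset.card_image_le
  have himp1c : imp1.card ≤ E'.card := Finset.card_image_le
  have hU' : (imp0 \ U).card + U.card = imp0.card :=
    Finset.card_sdiff_add_card_eq_card hU
  have hW'' : (imp1 \ W').card + W'.card = imp1.card :=
    Finset.card_sdiff_add_card_eq_card hW'
  have hx : U.card + (imp1 \ W').card ≤ E'.card + 1 := by omega
  have hy : (imp0 \ U).card + W'.card ≤ E'.card + 1 := by omega
  set a : ℕ := max U.card W'.card with ha_def
  have haU : U.card ≤ a := le_max_left _ _
  have haW : W'.card ≤ a := le_max_right _ _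
  have hachoice : a = U.card ∨ a = W'.card := max_choice _ _
  -- construct the per-part pieces of the first color class
  have hS : ∀ l : Fin r, ∃ S : Finset V, S ⊆ Wt ∩ parts l ∧ S.card = a ∧
      (∀ e ∈ E', (q0 e ∈ S ↔ l = P0 ∧ q0 e ∈ U)) ∧
      (∀ e ∈ E', (q1 e ∈ S ↔ l = P1 ∧ q1 e ∈ W')) := by
    intro l
    by_cases hl0 : l = P0
    · subst hl0
      have hsd : ((Wt ∩ parts P0) \ imp0).card + imp0.card = (Wt ∩ parts P0).card :=
        Finset.card_sdiff_add_card_eq_card himp0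
      have hpad : a - U.card ≤ ((Wt ∩ parts P0) \ imp0).card := by
        have := hWcard P0
        rcases hachoice with h | h <;> omega
      obtain ⟨pad, hpadsub, hpadcard⟩ := Finset.exists_subset_card_eq hpad
      have hdisjUpad : Disjoint U pad := by
        rw [Finset.disjoint_left]
        intro x hxU hxpad
        exact (Finset.mem_sdiff.1 (hpadsub hxpad)).2 (hU hxU)
      refine ⟨U ∪ pad, ?_, ?_, ?_, ?_⟩
      · apply Finset.union_subset
        · exact hU.trans (himp0_def ▸ himp0)
        · exact hpadsub.trans Finset.sdiff_subset
      · rw [Finset.card_union_of_disjoint hdisjUpad, hpadcard]; omega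
      · intro e he
        constructor
        · intro h
          rcases Finset.mem_union.1 h with h' | h'
          · exact ⟨rfl, h'⟩
          · exact absurd (Finset.mem_image.2 ⟨e, he, rfl⟩)
              (Finset.mem_sdiff.1 (hpadsub h')).2
        · rintro ⟨-, h⟩
          exact Finset.mem_union_left _ h
      · intro e he
        constructor
        · intro h
          exfalso
          have hP : q1 e ∈ parts P0 := by
            rcases Finset.mem_union.1 h with h' | h'
            · exact (Finset.mem_inter.1 (himp0 (hU h'))).2
            · exact (Finset.mem_inter.1 (Finset.sdiff_subset (hpadsub h'))).2
          exact Finset.disjoint_left.1 (hdisj P1 P0 (Ne.symm hP01)) (hq1mem e he).2 hP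
        · rintro ⟨h, -⟩
          exact absurd h hP01
    · by_cases hl1 : l = P1
      · subst hl1
        have hsd : ((Wt ∩ parts P1) \ imp1).card + imp1.card = (Wt ∩ parts P1).card :=
          Finset.card_sdiff_add_card_eq_card himp1
        have hpad : a - W'.card ≤ ((Wt ∩ parts P1) \ imp1).card := by
          have := hWcard P1
          rcases hachoice with h | h <;> omega
        obtain ⟨pad, hpadsub, hpadcard⟩ := Finset.exists_subset_card_eq hpad
        have hdisjWpad : Disjoint W' pad := by
          rw [Finset.disjoint_left]
          intro x hxW hxpad
          exact (Finset.mem_sdiff.1 (hpadsub hxpad)).2 (hW' hxW)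
        refine ⟨W' ∪ pad, ?_, ?_, ?_, ?_⟩
        · apply Finset.union_subset
          · exact hW'.trans (himp1_def ▸ himp1)
          · exact hpadsub.trans Finset.sdiff_subset
        · rw [Finset.card_union_of_disjoint hdisjWpad, hpadcard]; omega
        · intro e he
          constructor
          · intro h
            exfalso
            have hP : q0 e ∈ parts P1 := by
              rcases Finset.mem_union.1 h with h' | h'
              · exact (Finset.mem_inter.1 (himp1 (hW' h'))).2
              · exact (Finset.mem_inter.1 (Finset.sdiff_subset (hpadsub h'))).2
            exact Finset.disjoint_left.1 (hdisj P0 P1 hP01) (hq0mem e he).2 hP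
          · rintro ⟨h, -⟩
            exact absurd h (Ne.symm hP01)
        · intro e he
          constructor
          · intro h
            rcases Finset.mem_union.1 h with h' | h'
            · exact ⟨rfl, h'⟩
            · exact absurd (Finset.mem_image.2 ⟨e, he, rfl⟩)
                (Finset.mem_sdiff.1 (hpadsub h')).2
          · rintro ⟨-, h⟩
            exact Finset.mem_union_left _ h
      · have hle : a ≤ (Wt ∩ parts l).card := by
          rw [hWcard l]
          rcases hachoice with h | h <;> omega
        obtain ⟨S, hSsub, hScard⟩ := Finset.exists_subset_card_eq hle
        refine ⟨S, hSsub, hScard, ?_, ?_⟩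
        · intro e he
          constructor
          · intro h
            exfalso
            have hP : q0 e ∈ parts l := (Finset.mem_inter.1 (hSsub h)).2
            exact Finset.disjoint_left.1 (hdisj P0 l (Ne.symm hl0)) (hq0mem e he).2 hP
          · rintro ⟨h, -⟩
            exact absurd h hl0
        · intro e he
          constructor
          · intro h
            exfalso
            have hP : q1 e ∈ parts l := (Finset.mem_inter.1 (hSsub h)).2
            exact Finset.disjoint_left.1 (hdisj P1 l (Ne.symm hl1)) (hq1mem e he).2 hP
          · rintro ⟨h, -⟩
            exact absurd h hl1
  choose S hS1 hS2 hS3 hS4 using hS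
  set A : Finset V := Finset.univ.biUnion S with hA_def
  have hAint : ∀ l : Fin r, A ∩ parts l = S l := by
    intro l
    ext v
    simp only [hA_def, Finset.mem_inter, Finset.mem_biUnion, Finset.mem_univ, true_and]
    constructor
    · rintro ⟨⟨l', hvS⟩, hvP⟩
      rcases eq_or_ne l' l with rfl | hne
      · exact hvS
      · exact absurd hvP
          (Finset.disjoint_left.1 (hdisj l' l hne)
            ((Finset.mem_inter.1 (hS1 l' hvS)).2))
    · intro h
      exact ⟨⟨l, h⟩, (Finset.mem_inter.1 (hS1 l h)).2⟩
  have hAW : A ⊆ Wt := by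
    intro v hv
    obtain ⟨l, -, hvS⟩ := Finset.mem_biUnion.1 hv
    exact (Finset.mem_inter.1 (hS1 l hvS)).1
  -- the recoloring
  set fe : Fin q → ℕ := fun c => c.val + 2 -
      ((if i.val < c.val then 1 else 0) + (if j.val < c.val then 1 else 0) +
       (if k.val < c.val then 1 else 0)) with hfe_def
  have hijv : i.val < j.val := hij
  have hjkv : j.val < k.val := hjk
  have hkq : k.val < q := k.isLt
  have hvne : ∀ c c' : Fin q, c ≠ c' → c.val ≠ c'.val := by
    intro c c' h h'; exact h (Fin.ext h')
  have hfe2 : ∀ c : Fin q, c ≠ i → c ≠ j → c ≠ k → 2 ≤ fe c := by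
    intro c h1 h2 h3
    have e1 := hvne c i h1
    have e2 := hvne c j h2
    have e3 := hvne c k h3
    rw [hfe_def]
    dsimp only
    split_ifs <;> omega
  have hfelt : ∀ c : Fin q, c ≠ i → c ≠ j → c ≠ k → fe c < q - 1 := by
    intro c h1 h2 h3
    have e1 := hvne c i h1
    have e2 := hvne c j h2
    have e3 := hvne c k h3
    have := c.isLt
    rw [hfe_def]
    dsimp only
    split_ifs <;> omega
  have hfeinj : ∀ c c' : Fin q, c ≠ i → c ≠ j → c ≠ k → c' ≠ i → c' ≠ j → c' ≠ k →
      fe c = fe c' → c = c' := by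
    intro c c' h1 h2 h3 h1' h2' h3' h
    have e1 := hvne c i h1
    have e2 := hvne c j h2
    have e3 := hvne c k h3
    have f1 := hvne c' i h1'
    have f2 := hvne c' j h2'
    have f3 := hvne c' k h3'
    have := c.isLt
    have := c'.isLt
    apply Fin.ext
    rw [hfe_def] at h
    dsimp only at h
    split_ifs at h <;> omega
  set g : V → ℕ := fun v => if v ∈ A then 0 else
      (if φ v = i ∨ φ v = j ∨ φ v = k then 1 else fe (φ v)) with hg_def
  have hglt : ∀ v, g v < q - 1 := by
    intro v
    rw [hg_def]
    dsimp only
    split_ifs with h1 h2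
    · omega
    · omega
    · push_neg at h2
      exact hfelt (φ v) h2.1 h2.2.1 h2.2.2
  set ψ : V → Fin (q - 1) := fun v => ⟨g v, hglt v⟩ with hψ_def
  have hψval : ∀ v, (ψ v).val = g v := fun v => rfl
  have hg0 : ∀ v, g v = 0 ↔ v ∈ A := by
    intro v
    rw [hg_def]
    dsimp only
    split_ifs with h1 h2
    · simp [h1]
    · simp [h1]
    · push_neg at h2
      have := hfe2 (φ v) h2.1 h2.2.1 h2.2.2
      simp [h1]; omega
  have hg1 : ∀ v, g v = 1 ↔ (v ∈ Wt ∧ v ∉ A) := by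
    intro v
    rw [hg_def]
    dsimp only
    split_ifs with h1 h2
    · simp [h1]
    · simp [h1, (hmemW v).2 h2]
    · push_neg at h2
      have := hfe2 (φ v) h2.1 h2.2.1 h2.2.2
      constructor
      · omega
      · rintro ⟨hvW, -⟩
        rw [hmemW] at hvW
        rcases hvW with h | h | h
        · exact absurd h h2.1
        · exact absurd h h2.2.1
        · exact absurd h h2.2.2
  have hg2 : ∀ v (m : ℕ), 2 ≤ m → (g v = m ↔
      ((φ v ≠ i ∧ φ v ≠ j ∧ φ v ≠ k) ∧ fe (φ v) = m)) := by
    intro v m hm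
    rw [hg_def]
    dsimp only
    split_ifs with h1 h2
    · constructor
      · intro h; exfalso; omega
      · rintro ⟨⟨hi', hj', hk'⟩, -⟩
        exfalso
        have hvW := hAW h1
        rw [hmemW] at hvW
        rcases hvW with h | h | h
        exacts [hi' h, hj' h, hk' h]
    · constructor
      · intro h; exfalso; omega
      · rintro ⟨⟨hi', hj', hk'⟩, -⟩
        exfalso
        rcases h2 with h | h | h
        exacts [hi' h, hj' h, hk' h]
    · push_neg at h2
      constructor
      · intro h; exact ⟨h2, h⟩
      · rintro ⟨-, h⟩; exact h
  -- contradiction with minimality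
  apply hmin
  refine ⟨ψ, fun c => ?_⟩
  constructor
  · -- independence
    intro e he hsub
    have hsub' : ∀ v ∈ e, g v = c.val := by
      intro v hv
      have h := hsub hv
      rw [Finset.mem_filter] at h
      exact congrArg Fin.val h.2
    have hene : e.Nonempty := by
      have h1 := hedge e he P0
      rw [Finset.card_eq_one] at h1
      obtain ⟨x, hx⟩ := h1
      have : x ∈ e ∩ parts P0 := by rw [hx]; exact Finset.mem_singleton_self _
      exact ⟨x, (Finset.mem_inter.1 this).1⟩
    obtain ⟨v1, hv1⟩ := hene
    by_cases hc0 : c.val = 0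
    · have heA : e ⊆ A := by
        intro v hv
        exact (hg0 v).1 (by rw [hsub' v hv, hc0])
      have heE' : e ∈ E' := Finset.mem_filter.2 ⟨he, heA.trans hAW⟩
      have h0U : q0 e ∈ U := by
        have hmem : q0 e ∈ S P0 := by
          rw [← hAint P0]
          exact Finset.mem_inter.2 ⟨heA (hq0mem e heE').1, (hq0mem e heE').2⟩
        exact ((hS3 P0 e heE').1 hmem).2
      have h1W : q1 e ∈ W' := by
        have hmem : q1 e ∈ S P1 := by
          rw [← hAint P1]
          exact Finset.mem_inter.2 ⟨heA (hq1mem e heE').1, (hq1mem e heE').2⟩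
        exact ((hS4 P1 e heE').1 hmem).2
      exact ((hproper e heE').1 h0U) h1W
    · by_cases hc1 : c.val = 1
      · have heWA : ∀ v ∈ e, v ∈ Wt ∧ v ∉ A := by
          intro v hv
          exact (hg1 v).1 (by rw [hsub' v hv, hc1])
        have heE' : e ∈ E' := Finset.mem_filter.2 ⟨he, fun v hv => (heWA v hv).1⟩
        have h0 : q0 e ∉ U := by
          intro hU0
          have hmem : q0 e ∈ S P0 := (hS3 P0 e heE').2 ⟨rfl, hU0⟩
          have : q0 e ∈ A := by
            have := Finset.mem_inter.2 ⟨hmem, (hq0mem e heE').2⟩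
            rw [← hAint P0] at hmem
            exact (Finset.mem_inter.1 hmem).1
          exact (heWA _ (hq0mem e heE').1).2 this
        have h1 : q1 e ∈ W' := by
          by_contra hq1'
          exact h0 ((hproper e heE').2 hq1')
        have hmem : q1 e ∈ S P1 := (hS4 P1 e heE').2 ⟨rfl, h1⟩
        have : q1 e ∈ A := by
          rw [← hAint P1] at hmem
          exact (Finset.mem_inter.1 hmem).1
        exact (heWA _ (hq1mem e heE').1).2 this
      · have hc2 : 2 ≤ c.val := by omega
        have hall : ∀ v ∈ e, (φ v ≠ i ∧ φ v ≠ j ∧ φ v ≠ k) ∧ fe (φ v) = c.val := by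
          intro v hv
          exact (hg2 v c.val hc2).1 (hsub' v hv)
        have hsame : ∀ v ∈ e, φ v = φ v1 := by
          intro v hv
          obtain ⟨⟨a1, a2, a3⟩, a4⟩ := hall v hv
          obtain ⟨⟨b1, b2, b3⟩, b4⟩ := hall v1 hv1
          exact hfeinj (φ v) (φ v1) a1 a2 a3 b1 b2 b3 (by rw [a4, b4])
        apply hindJ (φ v1) e he
        intro v hv
        rw [hmemJ]
        exact hsame v hv
  · -- balance
    intro l l'
    by_cases hc0 : c.val = 0
    · have hfil : Finset.univ.filter (fun v => ψ v = c) = A := by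
        ext v
        rw [Finset.mem_filter]
        simp only [Finset.mem_univ, true_and]
        constructor
        · intro h
          exact (hg0 v).1 (by rw [← hψval v, h, hc0])
        · intro h
          apply Fin.ext
          rw [hψval, (hg0 v).2 h, hc0]
      rw [hfil, hAint l, hAint l', hS2 l, hS2 l']
    · by_cases hc1 : c.val = 1
      · have hfil : Finset.univ.filter (fun v => ψ v = c) = Wt \ A := by
          ext v
          rw [Finset.mem_filter, Finset.mem_sdiff]
          simp only [Finset.mem_univ, true_and]
          constructor
          · intro h
            exact (hg1 v).1 (by rw [← hψval v, h, hc1])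
          · intro h
            apply Fin.ext
            rw [hψval, (hg1 v).2 h, hc1]
        have hkey : ∀ l0 : Fin r, ((Wt \ A) ∩ parts l0).card = (Wt ∩ parts l0).card - a := by
          intro l0
          have h1 : (Wt \ A) ∩ parts l0 = (Wt ∩ parts l0) \ S l0 := by
            ext v
            rw [← hAint l0]
            simp only [Finset.mem_sdiff, Finset.mem_inter]
            constructor
            · rintro ⟨⟨h1, h2⟩, h3⟩
              exact ⟨⟨h1, h3⟩, fun hh => h2 hh.1⟩
            · rintro ⟨⟨h1, h3⟩, h2⟩
              exact ⟨⟨h1, fun hA => h2 ⟨hA, h3⟩⟩, h3⟩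
          rw [h1, Finset.card_sdiff_of_subset, hS2 l0]
          rw [← hAint l0]
          intro v hv
          exact Finset.mem_inter.2 ⟨hAW (Finset.mem_inter.1 hv).1, (Finset.mem_inter.1 hv).2⟩
        rw [hfil, hkey l, hkey l', hWcard l, hWcard l']
      · have hc2 : 2 ≤ c.val := by omega
        set P : Fin q → Prop := fun c0 => (c0 ≠ i ∧ c0 ≠ j ∧ c0 ≠ k) ∧ fe c0 = c.val
          with hP_def
        have hfil : Finset.univ.filter (fun v => ψ v = c) =
            Finset.univ.filter (fun v => P (φ v)) := by
          ext v
          rw [Finset.mem_filter, Finset.mem_filter]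
          simp only [Finset.mem_univ, true_and]
          constructor
          · intro h
            exact (hg2 v c.val hc2).1 (by rw [← hψval v, h])
          · intro h
            apply Fin.ext
            rw [hψval, (hg2 v c.val hc2).2 h]
        have hkey : ∀ l0 : Fin r, (Finset.univ.filter (fun v => P (φ v)) ∩ parts l0) =
            (Finset.univ.filter P).biUnion (fun c0 => J c0 ∩ parts l0) := by
          intro l0
          ext v
          simp only [Finset.mem_inter, Finset.mem_filter, Finset.mem_biUnion,
            Finset.mem_univ, true_and, hmemJ]
          constructor
          · rintro ⟨h1, h2⟩
            exact ⟨φ v, h1, rfl, h2⟩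
          · rintro ⟨c0, h1, h2, h3⟩
            exact ⟨h2 ▸ h1, h3⟩
        have hdisjP : ∀ x ∈ Finset.univ.filter P, ∀ y ∈ Finset.univ.filter P, x ≠ y →
            Disjoint (J x ∩ parts l) (J y ∩ parts l) := by
          intro x _ y _ hxy
          exact (hJd x y hxy).mono Finset.inter_subset_left Finset.inter_subset_left
        have hdisjP' : ∀ x ∈ Finset.univ.filter P, ∀ y ∈ Finset.univ.filter P, x ≠ y →
            Disjoint (J x ∩ parts l') (J y ∩ parts l') := by
          intro x _ y _ hxy
          exact (hJd x y hxy).mono Finset.inter_subset_left Finset.inter_subset_left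
        rw [hfil, hkey l, hkey l', Finset.card_biUnion hdisjP, Finset.card_biUnion hdisjP']
        exact Finset.sum_congr rfl (fun c0 _ => hbalJ c0 l l')
end
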